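/- arXiv:1311.2984 — 6 statements merged into one kernel-verified Lean document; each statement's English description precedes it below -/
import Mathlib

section
/- If n is a positive integer that is not a power of 2 (and n > 1), with least prime divisor q and greatest prime divisor p, then ∑_{d ∣ n} φ(d)·d ≥ ((q+1)/q)·(n²/p). -/
/-!
`F(n) = ∑_{d ∣ n} φ(d) d` is multiplicative with `(r + 1) F(r^a) = r^(2a+1) + 1` at prime powers,
so `F(n) ≥ n² ∏_{r ∣ n} r/(r+1)`. The primes dividing `n` are distinct integers in `[q, p]` and every
factor `m/(m+1)` is at most one, so the product is at least the telescoping product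
`∏_{m=q}^{p} m/(m+1) = q/(p+1)`. Finally `q/(p+1) ≥ (q+1)/(qp)` once `q ≥ 2` and `p ≥ 3`,
and `p = 2` would make `n` a power of two.
-/

open ArithmeticFunction Finset

noncomputable def totientMulSelf : ArithmeticFunction ℚ :=
  ⟨fun d => (d.totient * d : ℚ), by simp⟩

theorem totientMulSelf_apply (d : ℕ) : totientMulSelf d = d.totient * d := rfl

theorem isMultiplicative_totientMulSelf : totientMulSelf.IsMultiplicative := by
  refine ⟨by simp [totientMulSelf_apply], fun {m n} hmn => ?_⟩
  simp only [totientMulSelf_apply, Nat.totient_mul hmn]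
  push_cast
  ring

theorem sum_divisors_totient_mul_self_eq_prod_primeFactors {n : ℕ} (hn : n ≠ 0) :
    ∑ d ∈ n.divisors, (d.totient * d : ℚ) =
      ∏ r ∈ n.primeFactors, ∑ d ∈ (r ^ n.factorization r).divisors, (d.totient * d : ℚ) := by
  have hmul := isMultiplicative_zeta.natCast.mul isMultiplicative_totientMulSelf
  simp only [← totientMulSelf_apply, ← coe_zeta_mul_apply]
  rw [hmul.multiplicative_factorization _ hn, Nat.prod_factorization_eq_prod_primeFactors]

theorem succ_mul_sum_divisors_prime_pow_totient_mul_self {r : ℕ} (hr : r.Prime) (a : ℕ) :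
    ((r : ℚ) + 1) * ∑ d ∈ (r ^ a).divisors, (d.totient * d : ℚ) = r ^ (2 * a + 1) + 1 := by
  rw [Nat.sum_divisors_prime_pow hr]
  induction a with
  | zero => simp
  | succ a ih =>
    rw [sum_range_succ, mul_add, ih, Nat.totient_prime_pow_succ hr]
    push_cast [Nat.cast_sub hr.one_le]
    ring

theorem sq_mul_prod_primeFactors_div_succ_le_sum_divisors {n : ℕ} (hn : n ≠ 0) :
    (n : ℚ) ^ 2 * ∏ r ∈ n.primeFactors, (r : ℚ) / (r + 1) ≤
      ∑ d ∈ n.divisors, (d.totient * d : ℚ) := by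
  have hn_prod : (n : ℚ) = ∏ r ∈ n.primeFactors, (r : ℚ) ^ n.factorization r := by
    exact_mod_cast Nat.prod_primeFactors_pow_factorization hn
  rw [sum_divisors_totient_mul_self_eq_prod_primeFactors hn, hn_prod, ← prod_pow,
    ← prod_mul_distrib]
  refine prod_le_prod (fun _ _ => by positivity) fun r hr => ?_
  have hr_succ : (0 : ℚ) < r + 1 := by positivity
  rw [← mul_div_assoc, div_le_iff₀ hr_succ, mul_comm _ ((r : ℚ) + 1),
    succ_mul_sum_divisors_prime_pow_totient_mul_self (Nat.prime_of_mem_primeFactors hr)]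
  ring_nf
  linarith

theorem prod_Ico_div_succ {a b : ℕ} (ha : 0 < a) (hab : a ≤ b) :
    ∏ m ∈ Ico a b, (m : ℚ) / (m + 1) = a / b := by
  induction b, hab using Nat.le_induction with
  | base => simp [ha.ne']
  | succ b hab ih =>
    have hb : (b : ℚ) ≠ 0 := Nat.cast_ne_zero.mpr (by omega)
    rw [prod_Ico_succ_top hab, ih]
    push_cast
    field_simp

theorem div_succ_le_prod_div_succ_of_subset_Icc {s : Finset ℕ} {a b : ℕ} (ha : 0 < a)
    (hab : a ≤ b + 1) (hs : s ⊆ Icc a b) : (a : ℚ) / (b + 1) ≤ ∏ m ∈ s, (m : ℚ) / (m + 1) := by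
  have htele := prod_Ico_div_succ ha hab
  rw [← Finset.Ico_add_one_right_eq_Icc] at hs
  push_cast at htele
  rw [← htele]
  exact prod_le_prod_of_subset_of_le_one hs (fun _ _ => by positivity)
    fun m _ _ => (div_le_one (by positivity)).mpr (by linarith)

theorem three_le_of_forall_prime_dvd_le {n p : ℕ} (hn : n ≠ 0) (hn_two_pow : ¬ ∃ k, n = 2 ^ k)
    (hp : p.Prime) (hpmax : ∀ r : ℕ, r.Prime → r ∣ n → r ≤ p) : 3 ≤ p := by
  by_contra hp_lt
  have hp_two : p = 2 := by linarith [hp.two_le]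
  exact hn_two_pow ⟨_, Nat.eq_prime_pow_of_unique_prime_dvd hn fun hr hrn =>
    le_antisymm (hp_two ▸ hpmax _ hr hrn) hr.two_le⟩

theorem succ_div_mul_le_div_succ {q p : ℚ} (hq : 2 ≤ q) (hp : 3 ≤ p) :
    (q + 1) / (q * p) ≤ q / (p + 1) := by
  rw [div_le_div_iff₀ (by positivity) (by positivity)]
  have hq' : 0 ≤ q ^ 2 - q - 1 := by nlinarith
  -- `q²p - (q+1)(p+1) = (p - 3)(q² - q - 1) + (3q + 2)(q - 2)`
  nlinarith [mul_nonneg (sub_nonneg.mpr hp) hq', mul_nonneg (by linarith : (0 : ℚ) ≤ 3 * q + 2)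
    (sub_nonneg.mpr hq)]

theorem sum_totient_mul_self_lower_bound_general (n q p : ℕ) (hn : 1 < n)
    (hnot2 : ¬ ∃ k, n = 2 ^ k)
    (hq : q.Prime) (hqmin : ∀ r : ℕ, r.Prime → r ∣ n → q ≤ r)
    (hp : p.Prime) (hpdvd : p ∣ n) (hpmax : ∀ r : ℕ, r.Prime → r ∣ n → r ≤ p) :
    (∑ d ∈ n.divisors, (Nat.totient d * d : ℚ)) ≥
      ((q : ℚ) + 1) * (n : ℚ) ^ 2 / ((q : ℚ) * (p : ℚ)) := by
  have hn0 : n ≠ 0 := by omega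
  have hqp : q ≤ p := hqmin p hp hpdvd
  have hp3 : 3 ≤ p := three_le_of_forall_prime_dvd_le hn0 hnot2 hp hpmax
  have hfactors : n.primeFactors ⊆ Icc q p := fun r hr => by
    obtain ⟨hr_prime, hr_dvd, -⟩ := Nat.mem_primeFactors.mp hr
    exact mem_Icc.mpr ⟨hqmin r hr_prime hr_dvd, hpmax r hr_prime hr_dvd⟩
  calc ((q : ℚ) + 1) * (n : ℚ) ^ 2 / ((q : ℚ) * (p : ℚ))
      = (n : ℚ) ^ 2 * (((q : ℚ) + 1) / (q * p)) := by ring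
    _ ≤ (n : ℚ) ^ 2 * (q / (p + 1)) := by
      gcongr ?_ * ?_
      exact succ_div_mul_le_div_succ (mod_cast hq.two_le) (mod_cast hp3)
    _ ≤ (n : ℚ) ^ 2 * ∏ r ∈ n.primeFactors, (r : ℚ) / (r + 1) := by
      gcongr
      exact div_succ_le_prod_div_succ_of_subset_Icc hq.pos (by omega) hfactors
    _ ≤ ∑ d ∈ n.divisors, (d.totient * d : ℚ) :=
      sq_mul_prod_primeFactors_div_succ_le_sum_divisors hn0

theorem sum_totient_mul_self_lower_bound (n q p : ℕ) (hn : 1 < n)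
    (hnot2 : ¬ ∃ k, n = 2 ^ k)
    (hq : q.Prime) (hqdvd : q ∣ n) (hqmin : ∀ r : ℕ, r.Prime → r ∣ n → q ≤ r)
    (hp : p.Prime) (hpdvd : p ∣ n) (hpmax : ∀ r : ℕ, r.Prime → r ∣ n → r ≤ p) :
    (∑ d ∈ n.divisors, (Nat.totient d * d : ℚ)) ≥
      ((q : ℚ) + 1) * (n : ℚ) ^ 2 / ((q : ℚ) * (p : ℚ)) :=
  sum_totient_mul_self_lower_bound_general n q p hn hnot2 hq hqmin hp hpdvd hpmax
end

section
/- For the cyclic group ℤ_n, the number of edges in its power graph equals ∑_{d ∣ n} φ(d)·(d − φ(d)/2) − n/2, i.e., 2|E(ℤ_n)| = 2∑_{d∣n} φ(d)·d − ∑_{d∣n} φ(d)² − n. -/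
/-!
Count ordered pairs `(x, y)` with `x ∈ ⟨y⟩` or `y ∈ ⟨x⟩` by inclusion–exclusion. Pairs with
`y ∈ ⟨x⟩` and, by double counting, pairs with `x ∈ ⟨y⟩` both number `∑ₓ ord x`. In a cyclic
group `⟨x⟩ = ⟨y⟩` iff `ord x = ord y`, so pairs with both number `∑ₓ φ(ord x)`. Removing the
`n` diagonal pairs leaves `2|E|`, and grouping the elements by their order (there are `φ d` of
order `d`) turns `∑ₓ f(ord x)` into `∑_{d ∣ n} φ(d) f(d)`.
-/

/-- The (undirected) power graph of a group: distinct elements are adjacent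
iff one is a power of the other. -/
def powerGraph (G : Type*) [Group G] : SimpleGraph G where
  Adj g h := g ≠ h ∧ (g ∈ Subgroup.zpowers h ∨ h ∈ Subgroup.zpowers g)
  symm := ⟨fun _ _ ⟨hne, hor⟩ => ⟨hne.symm, hor.symm⟩⟩
  loopless := ⟨fun _ ⟨hne, _⟩ => hne rfl⟩

open Finset Subgroup

section Fintype

variable {G : Type*} [Group G] [Fintype G]

theorem card_filter_mem_zpowers (x : G) : #{y | y ∈ zpowers x} = orderOf x := by
  rw [← Fintype.card_subtype, Fintype.card_zpowers]

theorem sum_card_filter_mem_zpowers_swap :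
    ∑ x : G, #{y | x ∈ zpowers y} = ∑ x : G, orderOf x := by
  simp_rw [← card_filter_mem_zpowers]
  exact sum_card_bipartiteAbove_eq_sum_card_bipartiteBelow (r := fun x y => x ∈ zpowers y)

theorem powerGraph_degree_add_one [DecidableRel (powerGraph G).Adj] (x : G) :
    (powerGraph G).degree x + 1 = #{y | x ∈ zpowers y ∨ y ∈ zpowers x} := by
  classical
  rw [← SimpleGraph.card_neighborFinset_eq_degree,
    ← card_erase_add_one (a := x) (s := {y | x ∈ zpowers y ∨ y ∈ zpowers x}) (by simp)]
  congr 2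
  ext y
  rw [SimpleGraph.mem_neighborFinset, mem_erase, mem_filter]
  simp only [powerGraph, ne_comm, mem_univ, true_and]

end Fintype

theorem IsCyclic.mem_zpowers_iff_orderOf_dvd {G : Type*} [Group G] [Finite G] [IsCyclic G]
    {x y : G} : y ∈ zpowers x ↔ orderOf y ∣ orderOf x := by
  classical
  have := Fintype.ofFinite G
  refine ⟨orderOf_dvd_of_mem_zpowers, fun h => ?_⟩
  -- `zpowers x` already exhausts the at most `orderOf x` solutions of `a ^ orderOf x = 1`.
  have hsub : ({a | a ∈ zpowers x} : Finset G) ⊆ ({a | a ^ orderOf x = 1} : Finset G) := by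
    intro a ha
    simp only [mem_filter, mem_univ, true_and] at ha ⊢
    exact orderOf_dvd_iff_pow_eq_one.1 (orderOf_dvd_of_mem_zpowers ha)
  have hcard : #({a | a ^ orderOf x = 1} : Finset G) ≤ #({a | a ∈ zpowers x} : Finset G) := by
    rw [card_filter_mem_zpowers]
    exact IsCyclic.card_pow_eq_one_le (orderOf_pos x)
  have hy : y ∈ ({a | a ^ orderOf x = 1} : Finset G) := by
    simpa [orderOf_dvd_iff_pow_eq_one] using h
  rw [← eq_of_subset_of_card_le hsub hcard] at hy
  simpa using hy

section IsCyclic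

variable {G : Type*} [Group G] [Fintype G] [IsCyclic G]

theorem IsCyclic.sum_comp_orderOf {M : Type*} [AddCommMonoid M] (f : ℕ → M) :
    ∑ x : G, f (orderOf x) = ∑ d ∈ (Fintype.card G).divisors, d.totient • f d := by
  classical
  rw [← sum_fiberwise_of_maps_to (g := orderOf) (t := (Fintype.card G).divisors)
    fun x _ => Nat.mem_divisors.2 ⟨orderOf_dvd_card, Fintype.card_ne_zero⟩]
  refine sum_congr rfl fun d hd => ?_
  rw [sum_congr rfl fun x hx => congrArg f (mem_filter.1 hx).2, sum_const,
    IsCyclic.card_orderOf_eq_totient (Nat.dvd_of_mem_divisors hd)]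

theorem IsCyclic.card_filter_mem_zpowers_and_mem_zpowers (x : G) :
    #{y | x ∈ zpowers y ∧ y ∈ zpowers x} = (orderOf x).totient := by
  rw [← IsCyclic.card_orderOf_eq_totient orderOf_dvd_card]
  congr 1
  ext y
  simp only [mem_filter, mem_univ, true_and, IsCyclic.mem_zpowers_iff_orderOf_dvd]
  exact ⟨fun h => Nat.dvd_antisymm h.2 h.1, fun h => ⟨h ▸ dvd_rfl, h ▸ dvd_rfl⟩⟩

theorem IsCyclic.powerGraph_degree_add_totient [DecidableRel (powerGraph G).Adj] (x : G) :
    (powerGraph G).degree x + 1 + (orderOf x).totient = #{y | x ∈ zpowers y} + orderOf x := by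
  classical
  rw [powerGraph_degree_add_one, ← IsCyclic.card_filter_mem_zpowers_and_mem_zpowers,
    ← card_filter_mem_zpowers, filter_or, filter_and, card_union_add_card_inter]

theorem IsCyclic.two_mul_card_edgeFinset_powerGraph [DecidableRel (powerGraph G).Adj] :
    2 * #(powerGraph G).edgeFinset + Fintype.card G +
        ∑ d ∈ (Fintype.card G).divisors, d.totient ^ 2 =
      2 * ∑ d ∈ (Fintype.card G).divisors, d.totient * d := by
  have hsum := sum_congr rfl fun (x : G) (_ : x ∈ univ) =>
    IsCyclic.powerGraph_degree_add_totient x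
  simp only [sum_add_distrib, sum_const, card_univ, smul_eq_mul, mul_one,
    SimpleGraph.sum_degrees_eq_twice_card_edges, sum_card_filter_mem_zpowers_swap] at hsum
  have hord := IsCyclic.sum_comp_orderOf (G := G) (fun d => d)
  have htot := IsCyclic.sum_comp_orderOf (G := G) Nat.totient
  simp only [smul_eq_mul] at hord htot
  simp only [sq, ← htot, ← hord]
  omega

end IsCyclic

theorem two_mul_card_power_graph_edges_zmod (n : ℕ) [NeZero n] :
    2 * Nat.card (powerGraph (Multiplicative (ZMod n))).edgeSet =
      2 * (∑ d ∈ n.divisors, Nat.totient d * d) -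
        (∑ d ∈ n.divisors, Nat.totient d ^ 2) - n := by
  classical
  have key := IsCyclic.two_mul_card_edgeFinset_powerGraph (G := Multiplicative (ZMod n))
  rw [Fintype.card_multiplicative, ZMod.card] at key
  rw [Nat.card_eq_fintype_card, ← SimpleGraph.edgeFinset_card]
  omega
end

section
/- In the cyclic group ℤ_n, an element z of order e has degree in the power graph equal to e − 1 − φ(e) + ∑_{d ∣ n/e} φ(d·e). -/
open Finset Nat

theorem Nat.sum_divisors_filter_dvd {M : Type*} [AddCommMonoid M] (f : ℕ → M) {e n : ℕ}
    (hen : e ∣ n) (hn : n ≠ 0) :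
    ∑ k ∈ n.divisors with e ∣ k, f k = ∑ d ∈ (n / e).divisors, f (d * e) := by
  obtain ⟨m, rfl⟩ := hen
  have he : e ≠ 0 := left_ne_zero_of_mul hn
  have hm : m ≠ 0 := right_ne_zero_of_mul hn
  rw [Nat.mul_div_cancel_left m (Nat.pos_of_ne_zero he)]
  symm
  refine Finset.sum_nbij' (· * e) (· / e) ?_ ?_ ?_ ?_ (fun _ _ => rfl)
  · intro d hd
    simp only [mem_filter, Nat.mem_divisors] at hd ⊢
    exact ⟨⟨(mul_dvd_mul_right hd.1 e).trans (mul_comm m e).dvd, hn⟩, dvd_mul_left e d⟩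
  · intro k hk
    simp only [mem_filter, Nat.mem_divisors] at hk ⊢
    obtain ⟨⟨hkn, -⟩, c, rfl⟩ := hk
    refine ⟨?_, hm⟩
    rw [Nat.mul_div_cancel_left c (Nat.pos_of_ne_zero he)]
    exact (Nat.mul_dvd_mul_iff_left (Nat.pos_of_ne_zero he)).mp hkn
  · intro d _
    simp [he]
  · intro k hk
    simp only [mem_filter] at hk
    exact Nat.div_mul_cancel hk.2

section Cyclic

variable {G : Type*} [Group G] [Fintype G] [IsCyclic G]

theorem IsCyclic.mem_zpowers_iff_orderOf_dvd_s14 {g x : G} :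
    x ∈ Subgroup.zpowers g ↔ orderOf x ∣ orderOf g := by
  classical
  refine ⟨orderOf_dvd_of_mem_zpowers, fun hdvd => ?_⟩
  -- `zpowers g` has `orderOf g` elements, the most a cyclic group allows for `y ^ orderOf g = 1`.
  have hroots : (Subgroup.zpowers g : Set G).toFinset = ({y | y ^ orderOf g = 1} : Finset G) := by
    refine Finset.eq_of_subset_of_card_le (fun y hy => ?_) ?_
    · simp only [Set.mem_toFinset, SetLike.mem_coe] at hy
      simpa using orderOf_dvd_iff_pow_eq_one.mp (orderOf_dvd_of_mem_zpowers hy)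
    · rw [← Nat.card_eq_card_toFinset, SetLike.coe_sort_coe, Nat.card_zpowers]
      exact IsCyclic.card_pow_eq_one_le (orderOf_pos g)
  have hx : x ∈ ({y : G | y ^ orderOf g = 1} : Finset G) := by
    simpa using orderOf_dvd_iff_pow_eq_one.mp hdvd
  simpa [← hroots] using hx

theorem powerGraph_adj_iff_orderOf_dvd {g h : G} :
    (powerGraph G).Adj g h ↔ g ≠ h ∧ (orderOf g ∣ orderOf h ∨ orderOf h ∣ orderOf g) := by
  simp only [powerGraph, IsCyclic.mem_zpowers_iff_orderOf_dvd_s14]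

theorem IsCyclic.card_filter_orderOf (p : ℕ → Prop) [DecidablePred p] :
    #{x : G | p (orderOf x)} = ∑ k ∈ (Fintype.card G).divisors with p k, φ k := by
  rw [card_eq_sum_card_fiberwise (f := orderOf) (t := {k ∈ (Fintype.card G).divisors | p k})]
  · refine sum_congr rfl fun k hk => ?_
    rw [mem_filter, Nat.mem_divisors] at hk
    rw [← IsCyclic.card_orderOf_eq_totient hk.1.1, filter_filter]
    congr 1
    ext x
    simp only [mem_filter, mem_univ, true_and]
    exact ⟨And.right, fun hx => ⟨hx ▸ hk.2, hx⟩⟩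
  · intro x hx
    simp only [coe_filter, mem_univ, true_and, Set.mem_ofPred_eq, Nat.mem_divisors] at hx ⊢
    exact ⟨⟨orderOf_dvd_card, Fintype.card_ne_zero⟩, hx⟩

theorem powerGraph_neighborSet_card_add (z : G) :
    Nat.card ((powerGraph G).neighborSet z) + 1 + φ (orderOf z) =
      orderOf z + ∑ d ∈ (Fintype.card G / orderOf z).divisors, φ (d * orderOf z) := by
  classical
  have hneighbors : (powerGraph G).neighborSet z =
      ↑((({x | orderOf x ∣ orderOf z} : Finset G) ∪
        ({x | orderOf z ∣ orderOf x} : Finset G)).erase z) := by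
    ext x
    simp [powerGraph_adj_iff_orderOf_dvd, ne_comm, or_comm, and_comm]
  have hbelow : #{x : G | orderOf x ∣ orderOf z} = orderOf z := by
    rw [IsCyclic.card_filter_orderOf (· ∣ orderOf z),
      Nat.divisors_filter_dvd_of_dvd Fintype.card_ne_zero orderOf_dvd_card, Nat.sum_totient]
  have habove : #{x : G | orderOf z ∣ orderOf x} =
      ∑ d ∈ (Fintype.card G / orderOf z).divisors, φ (d * orderOf z) := by
    rw [IsCyclic.card_filter_orderOf (orderOf z ∣ ·),
      Nat.sum_divisors_filter_dvd _ orderOf_dvd_card Fintype.card_ne_zero]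
  have hboth : ({x | orderOf x ∣ orderOf z} : Finset G) ∩
      ({x | orderOf z ∣ orderOf x} : Finset G) = ({x | orderOf x = orderOf z} : Finset G) := by
    ext x
    simp only [mem_inter, mem_filter, mem_univ, true_and]
    exact ⟨fun h => Nat.dvd_antisymm h.1 h.2, fun h => ⟨h.dvd, h.symm.dvd⟩⟩
  rw [hneighbors, Nat.card_coe_set_eq, Set.ncard_coe_finset,
    card_erase_add_one (mem_union_left _ (by simp)),
    ← IsCyclic.card_orderOf_eq_totient orderOf_dvd_card, ← hboth, card_union_add_card_inter,
    hbelow, habove]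

end Cyclic

theorem degree_power_graph_zmod (n : ℕ) [NeZero n]
    (z : Multiplicative (ZMod n)) (e : ℕ) (he : orderOf z = e) :
    (Nat.card ((powerGraph (Multiplicative (ZMod n))).neighborSet z) : ℤ) =
      (e : ℤ) - 1 - Nat.totient e +
        ∑ d ∈ (n / e).divisors, (Nat.totient (d * e) : ℤ) := by
  subst he
  have hdeg := powerGraph_neighborSet_card_add z
  rw [Fintype.card_multiplicative, ZMod.card] at hdeg
  zify at hdeg
  linarith
end

section
/- Let G be a finite group which is an internal semidirect product of a normal abelian subgroup U and a subgroup V of coprime orders. Then for all u ∈ U and v ∈ V, the order of the product uv in G divides o(u)·o(v). -/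
/-! Modulo the normal subgroup of elements of `U` killed by `o(u)`, the product `uv` becomes `v`;
hence `(uv)^o(v)` lies in that subgroup and its `o(u)`-th power is trivial. -/

namespace Subgroup

variable {G : Type*} [Group G]

def powTorsionOfComm (U : Subgroup G) (hU : ∀ a ∈ U, ∀ b ∈ U, a * b = b * a) (n : ℕ) :
    Subgroup G where
  carrier := {w | w ∈ U ∧ w ^ n = 1}
  one_mem' := ⟨U.one_mem, one_pow n⟩
  mul_mem' {a b} := fun ⟨ha, ha'⟩ ⟨hb, hb'⟩ =>
    ⟨U.mul_mem ha hb, by rw [Commute.mul_pow (hU a ha b hb), ha', hb', one_mul]⟩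
  inv_mem' := fun ⟨ha, ha'⟩ => ⟨U.inv_mem ha, by rw [inv_pow, ha', inv_one]⟩

@[simp]
theorem mem_powTorsionOfComm (U : Subgroup G) (hU : ∀ a ∈ U, ∀ b ∈ U, a * b = b * a) (n : ℕ)
    {w : G} : w ∈ U.powTorsionOfComm hU n ↔ w ∈ U ∧ w ^ n = 1 :=
  Iff.rfl

instance powTorsionOfComm_normal (U : Subgroup G) [U.Normal]
    (hU : ∀ a ∈ U, ∀ b ∈ U, a * b = b * a) (n : ℕ) : (U.powTorsionOfComm hU n).Normal where
  conj_mem := fun _ ⟨hw, hw'⟩ g =>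
    ⟨Normal.conj_mem ‹_› _ hw g, by rw [conj_pow, hw', mul_one, mul_inv_cancel]⟩

theorem mul_pow_orderOf_mem_of_mem (N : Subgroup G) [N.Normal] {u : G} (hu : u ∈ N) (g : G) :
    (u * g) ^ orderOf g ∈ N := by
  rw [← QuotientGroup.eq_one_iff, QuotientGroup.mk_pow, QuotientGroup.mk_mul,
    (QuotientGroup.eq_one_iff u).mpr hu, one_mul, ← QuotientGroup.mk_pow, pow_orderOf_eq_one,
    QuotientGroup.mk_one]

end Subgroup

theorem orderOf_mul_dvd_of_semidirect_general (G : Type*) [Group G]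
    (U V : Subgroup G) [U.Normal]
    (hab : ∀ a ∈ U, ∀ b ∈ U, a * b = b * a) :
    ∀ u ∈ U, ∀ v ∈ V, orderOf (u * v) ∣ orderOf u * orderOf v := by
  intro u hu v _
  have hpow : (u * v) ^ orderOf v ∈ U.powTorsionOfComm hab (orderOf u) :=
    Subgroup.mul_pow_orderOf_mem_of_mem _
      ((U.mem_powTorsionOfComm hab _).mpr ⟨hu, pow_orderOf_eq_one u⟩) v
  apply orderOf_dvd_of_pow_eq_one
  rw [mul_comm, pow_mul]
  exact ((U.mem_powTorsionOfComm hab _).mp hpow).2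

theorem orderOf_mul_dvd_of_semidirect (G : Type*) [Group G] [Finite G]
    (U V : Subgroup G) [U.Normal]
    (hab : ∀ a ∈ U, ∀ b ∈ U, a * b = b * a)
    (hprod : ∀ g : G, ∃ u ∈ U, ∃ v ∈ V, g = u * v)
    (hinter : U ⊓ V = ⊥)
    (hcop : Nat.Coprime (Nat.card U) (Nat.card V)) :
    ∀ u ∈ U, ∀ v ∈ V, orderOf (u * v) ∣ orderOf u * orderOf v :=
  orderOf_mul_dvd_of_semidirect_general G U V hab
end

section
/- A finite group containing a cyclic subgroup of prime index has a non-trivial normal Sylow subgroup. -/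
/-!
Induction on `|G|`, with `p = [G : C]`. If `G` is a `p`-group, `G` itself is the Sylow subgroup.
Otherwise pick a prime `q ≠ p` dividing `|G|`; a Sylow `q`-subgroup `Q` of `G` lies in `C`, so the
abelian group `C` centralizes `Q`. As `C` has prime index, either `Q` is normal, or
`N_G(Q) = C ≤ C_G(Q)` and Burnside's transfer theorem gives `Q` a normal complement `K`. Then
`C ∩ K` is cyclic of index `p` in `K` (the indices `p` and `[G : K] = |Q|` are coprime), and a
normal Sylow subgroup of `K`, being characteristic in the normal Hall subgroup `K`, is one of `G`.
-/

open Subgroup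

def HasNontrivialNormalSylow (G : Type*) [Group G] : Prop :=
  ∃ r : ℕ, r.Prime ∧ r ∣ Nat.card G ∧
    ∃ P : Sylow r G, (P : Subgroup G).Normal ∧ (P : Subgroup G) ≠ ⊥

section

variable {G : Type*} [Group G]

theorem Subgroup.relIndex_eq_index_of_coprime {H K : Subgroup G} [H.FiniteIndex]
    (h : H.index.Coprime K.index) : H.relIndex K = H.index := by
  have hK := relIndex_mul_index (inf_le_right : H ⊓ K ≤ K)
  have hH := relIndex_mul_index (inf_le_left : H ⊓ K ≤ H)
  rw [inf_relIndex_right] at hK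
  rw [inf_relIndex_left, ← hK] at hH
  have hdvd : H.index ∣ H.relIndex K := h.dvd_of_dvd_mul_right (hH ▸ dvd_mul_left _ _)
  have hH0 : H.index ≠ 0 := FiniteIndex.index_ne_zero
  have hle : H.relIndex K ≤ H.index :=
    relIndex_top_right H ▸ relIndex_le_of_le_right le_top (by rwa [relIndex_top_right])
  exact hle.antisymm
    (Nat.le_of_dvd (Nat.pos_of_ne_zero (mt index_eq_zero_of_relIndex_eq_zero hH0)) hdvd)

instance Subgroup.isCyclic_subgroupOf (H K : Subgroup G) [IsCyclic H] :
    IsCyclic (H.subgroupOf K) :=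
  isCyclic_of_injective (K.subtype.subgroupComap H) fun _ _ h ↦
    Subtype.ext <| Subtype.ext (congrArg Subtype.val h :)

theorem Subgroup.normal_or_normalizer_le_centralizer {H C : Subgroup G} [C.FiniteIndex]
    [IsMulCommutative C] (hC : C.index.Prime) (hHC : H ≤ C) :
    H.Normal ∨ normalizer (H : Set G) ≤ centralizer (H : Set G) := by
  have hCZ : C ≤ centralizer (H : Set G) := (le_centralizer C).trans (centralizer_le hHC)
  have hCN : C ≤ normalizer (H : Set G) := hCZ.trans (centralizer_le_normalizer _)
  rcases hC.eq_one_or_self_of_dvd _ (index_dvd_of_le hCN) with h | h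
  · exact .inl (normalizer_eq_top_iff.mp (index_eq_one.mp h))
  · refine .inr (le_of_eq_of_le ?_ hCZ)
    exact (hCN.lt_or_eq.resolve_left fun hlt ↦ (index_strictAnti hlt).ne h).symm

theorem exists_prime_dvd_card_ne_of_not_isPGroup [Finite G] {p : ℕ} (hp : p.Prime)
    (hG : ¬ IsPGroup p G) : ∃ q, q.Prime ∧ q ∣ Nat.card G ∧ q ≠ p := by
  obtain ⟨q, hqG, hqp⟩ := Finset.not_subset.mp
    ((isPGroup_iff_primeFactors_card_subset hp.ne_zero).not.mp hG)
  rw [hp.primeFactors, Finset.mem_singleton] at hqp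
  exact ⟨q, Nat.prime_of_mem_primeFactors hqG, Nat.dvd_of_mem_primeFactors hqG, hqp⟩

namespace Sylow

variable {p : ℕ} [Fact p.Prime] {H : Subgroup G}

noncomputable def mapSubtype (P : Sylow p H) [P.FiniteIndex] (h : ¬ p ∣ H.index) : Sylow p G :=
  (P.2.map H.subtype).toSylow <| by
    rw [index_map_subtype]
    exact (Nat.Prime.dvd_mul Fact.out).not.mpr (not_or_intro P.not_dvd_index h)

@[simp]
theorem coe_mapSubtype (P : Sylow p H) [P.FiniteIndex] (h : ¬ p ∣ H.index) :
    (P.mapSubtype h : Subgroup G) = (P : Subgroup H).map H.subtype :=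
  rfl

theorem normal_mapSubtype [H.Normal] [Finite (Sylow p H)] (P : Sylow p H) [P.FiniteIndex]
    (h : ¬ p ∣ H.index) (hP : (P : Subgroup H).Normal) : (P.mapSubtype h : Subgroup G).Normal :=
  have := P.characteristic_of_normal hP
  (coe_mapSubtype P h).symm ▸ inferInstance

theorem exists_le_of_not_dvd_index [Finite G] (h : ¬ p ∣ H.index) :
    ∃ P : Sylow p G, (P : Subgroup G) ≤ H :=
  let ⟨P⟩ := (inferInstance : Nonempty (Sylow p H))
  ⟨P.mapSubtype h, map_subtype_le _⟩

end Sylow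

theorem HasNontrivialNormalSylow.of_isPGroup [Finite G] {p : ℕ} (hp : p.Prime)
    (hG : IsPGroup p G) (hpG : p ∣ Nat.card G) : HasNontrivialNormalSylow G :=
  have : Fact p.Prime := ⟨hp⟩
  let P : Sylow p G := (hG.to_subgroup ⊤).toSylow (by simpa using hp.not_dvd_one)
  ⟨p, hp, hpG, P, by simp only [P, IsPGroup.toSylow_coe]; infer_instance,
    P.ne_bot_of_dvd_card hpG⟩

theorem HasNontrivialNormalSylow.of_normal_of_coprime [Finite G] {K : Subgroup G} [K.Normal]
    (hK : (Nat.card K).Coprime K.index) (h : HasNontrivialNormalSylow K) :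
    HasNontrivialNormalSylow G := by
  obtain ⟨r, hr, hrK, R, hRn, hRb⟩ := h
  have : Fact r.Prime := ⟨hr⟩
  have hrK' : ¬ r ∣ K.index := fun hdvd ↦
    hr.one_lt.ne' (Nat.eq_one_of_dvd_coprimes hK hrK hdvd)
  refine ⟨r, hr, hrK.trans K.card_subgroup_dvd_card, R.mapSubtype hrK',
    R.normal_mapSubtype hrK' hRn, ?_⟩
  rwa [Sylow.coe_mapSubtype, Ne, map_eq_bot_iff_of_injective _ K.subtype_injective]

end

theorem exists_normal_sylow_of_cyclic_prime_index (G : Type*) [Group G] [Finite G]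
    (C : Subgroup G) (hC : IsCyclic C) (hidx : (C.index).Prime) :
    ∃ r : ℕ, r.Prime ∧ r ∣ Nat.card G ∧
      ∃ P : Sylow r G, (P : Subgroup G).Normal ∧ (P : Subgroup G) ≠ ⊥ := by
  change HasNontrivialNormalSylow G
  induction hn : Nat.card G using Nat.strong_induction_on generalizing G with
  | _ n ih =>
  by_cases hG : IsPGroup C.index G
  · exact .of_isPGroup hidx hG C.index_dvd_card
  obtain ⟨q, hq, hqG, hqp⟩ := exists_prime_dvd_card_ne_of_not_isPGroup hidx hG
  have : Fact q.Prime := ⟨hq⟩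
  have hqC : q.Coprime C.index := (Nat.coprime_primes hq hidx).mpr hqp
  obtain ⟨Q, hQC⟩ := Sylow.exists_le_of_not_dvd_index (hq.coprime_iff_not_dvd.mp hqC)
  rcases normal_or_normalizer_le_centralizer hidx hQC with hQ | hQ
  · exact ⟨q, hq, hqG, Q, hQ, Q.ne_bot_of_dvd_card hqG⟩
  set K := (MonoidHom.transferSylow Q hQ).ker
  have hKQ : K.IsComplement' Q := MonoidHom.ker_transferSylow_isComplement' Q hQ
  have hKcop : (Nat.card K).Coprime K.index :=
    hKQ.index_eq_card ▸ hKQ.symm.index_eq_card ▸ Q.card_coprime_index.symm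
  have hCK : (C.subgroupOf K).index = C.index := C.relIndex_eq_index_of_coprime <| by
    rw [hKQ.symm.index_eq_card, Q.card_eq_multiplicity]
    exact (hqC.pow_left _).symm
  have hKG : Nat.card K < n := hn ▸ hKQ.card_mul_card ▸
    (Nat.lt_mul_iff_one_lt_right Nat.card_pos).mpr
      (Q.one_lt_card_iff_ne_bot.mpr (Q.ne_bot_of_dvd_card hqG))
  exact (ih _ hKG K (C.subgroupOf K) inferInstance (hCK ▸ hidx) rfl).of_normal_of_coprime hKcop
end

section
/- If G is a finite group of order n and there exists a bijection λ : G → ℤ_n such that o(g) divides o(λ(g)) for all g ∈ G, and moreover ∑_{g∈G}(2·o(g) − φ(o(g))) = ∑_{z∈ℤ_n}(2·o(z) − φ(o(z))), then G is cyclic. -/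
/-! The weight `2 * d - φ d` strictly increases along proper divisibility, because a proper
divisor `d` of `m` satisfies `2 * d ≤ m` while `0 < φ d` and `φ m < m`. Since `λ` only
enlarges orders along divisibility, equality of the weight sums forces
`o(g) = o(λ g)` for every `g`; then `λ⁻¹ 1` has order `n`. -/

open Nat

theorem Nat.two_mul_sub_totient_lt_of_dvd_of_ne {d m : ℕ} (hm : 0 < m) (hdm : d ∣ m)
    (hne : d ≠ m) : 2 * d - φ d < 2 * m - φ m := by
  have hd : 0 < d := Nat.pos_of_dvd_of_pos hdm hm
  have h2d : 2 * d ≤ m := by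
    obtain ⟨k, rfl⟩ := hdm
    have hk : 2 ≤ k := by
      rcases k with _ | _ | k
      · simp at hm
      · simp at hne
      · omega
    rw [mul_comm]
    exact Nat.mul_le_mul_left d hk
  have := totient_lt m (by omega)
  have := totient_pos.mpr hd
  have := totient_le d
  omega

theorem Nat.two_mul_sub_totient_le_of_dvd {d m : ℕ} (hm : 0 < m) (hdm : d ∣ m) :
    2 * d - φ d ≤ 2 * m - φ m := by
  rcases eq_or_ne d m with rfl | hne
  · rfl
  · exact (two_mul_sub_totient_lt_of_dvd_of_ne hm hdm hne).le

theorem Finset.eq_of_dvd_of_sum_two_mul_sub_totient_eq {ι : Type*} (s : Finset ι)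
    {a b : ι → ℕ} (hb : ∀ i ∈ s, 0 < b i) (hab : ∀ i ∈ s, a i ∣ b i)
    (hsum : ∑ i ∈ s, (2 * a i - φ (a i)) = ∑ i ∈ s, (2 * b i - φ (b i))) :
    ∀ i ∈ s, a i = b i := by
  have hle i (hi : i ∈ s) := two_mul_sub_totient_le_of_dvd (hb i hi) (hab i hi)
  have hweight := (Finset.sum_eq_sum_iff_of_le hle).1 hsum
  intro i hi
  by_contra hne
  exact (two_mul_sub_totient_lt_of_dvd_of_ne (hb i hi) (hab i hi) hne).ne (hweight i hi)

theorem isCyclic_of_order_dvd_bijection_general (G : Type*) [Group G] [Fintype G]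
    (n : ℕ) [NeZero n]
    (lam : G ≃ ZMod n)
    (hdvd : ∀ g : G, orderOf g ∣ addOrderOf (lam g))
    (hsum : ∑ g : G, (2 * orderOf g - Nat.totient (orderOf g)) =
        ∑ z : ZMod n, (2 * addOrderOf z - Nat.totient (addOrderOf z))) :
    IsCyclic G := by
  have horder : ∀ g ∈ Finset.univ, orderOf g = addOrderOf (lam g) :=
    Finset.univ.eq_of_dvd_of_sum_two_mul_sub_totient_eq (fun g _ => addOrderOf_pos (lam g))
      (fun g _ => hdvd g) (hsum.trans (lam.sum_comp _).symm)
  refine isCyclic_of_orderOf_eq_card (lam.symm 1) ?_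
  rw [horder _ (Finset.mem_univ _), lam.apply_symm_apply, ZMod.addOrderOf_one,
    Nat.card_congr lam, Nat.card_zmod]

theorem isCyclic_of_order_dvd_bijection (G : Type*) [Group G] [Fintype G]
    (n : ℕ) [NeZero n] (hcard : Fintype.card G = n)
    (lam : G ≃ ZMod n)
    (hdvd : ∀ g : G, orderOf g ∣ addOrderOf (lam g))
    (hsum : ∑ g : G, (2 * orderOf g - Nat.totient (orderOf g)) =
        ∑ z : ZMod n, (2 * addOrderOf z - Nat.totient (addOrderOf z))) :
    IsCyclic G :=
  isCyclic_of_order_dvd_bijection_general G n lam hdvd hsum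
end
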